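/- Let g be a real semisimple Lie algebra with Cartan decomposition g = k ⊕ m, Z ∈ m, and Y′ ∈ k. Write Y′ = Σ_λ Y_λ where Y_λ are eigenvectors of ad(Z) with real eigenvalues λ. Then θ(Y_λ) = Y_{−λ} for each λ, and B_θ(Ad(exp Z)Y′, Ad(exp Z)Y′) = Σ_λ e^{2λ} B_θ(Y_λ, Y_λ) ≥ B_θ(Y′, Y′). -/

import Mathlib

/-! Since `θ Z = -Z`, invariance of the Killing form makes `ad Z` symmetric for `B_θ`, so
eigenvectors of `ad Z` for distinct eigenvalues are `B_θ`-orthogonal, and `exp (ad Z)` scales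
`Y_λ` by `e^λ`; this gives the expansion. As `θ` anticommutes with `ad Z` and fixes `Y'`,
uniqueness of the eigen-decomposition forces `θ Y_λ = Y_{-λ}`. Hence `B_θ(Y_λ, Y_λ)` is even in
`λ`, and pairing `λ` with `-λ` turns `Σ e^{2λ} B_θ(Y_λ, Y_λ)` into
`Σ cosh (2λ) B_θ(Y_λ, Y_λ) ≥ Σ B_θ(Y_λ, Y_λ)`. -/

/-- The Killing form `B(X,Y) = tr(ad X ∘ ad Y)` of a (finite-dimensional real) Lie
algebra whose bracket is given by the bilinear map `br`. -/
noncomputable def killingB {L : Type*} [NormedAddCommGroup L] [NormedSpace ℝ L]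
    [FiniteDimensional ℝ L] (br : L →ₗ[ℝ] L →ₗ[ℝ] L) (X Y : L) : ℝ :=
  LinearMap.trace ℝ L ((br X) ∘ₗ (br Y))

/-- The positive definite form `B_θ(X,Y) = −B(X, θY)`. -/
noncomputable def Btheta {L : Type*} [NormedAddCommGroup L] [NormedSpace ℝ L]
    [FiniteDimensional ℝ L] (br : L →ₗ[ℝ] L →ₗ[ℝ] L) (θ : L →ₗ[ℝ] L) (X Y : L) : ℝ :=
  -(killingB br X (θ Y))

lemma Finset.sum_comp_neg_of_neg_mem {K M : Type*} [InvolutiveNeg K] [AddCommMonoid M]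
    {s : Finset K} (hs : ∀ l ∈ s, -l ∈ s) (f : K → M) : ∑ l ∈ s, f (-l) = ∑ l ∈ s, f l :=
  Finset.sum_equiv (Equiv.neg K) (fun l => ⟨hs l, fun h => neg_neg l ▸ hs _ h⟩)
    (fun _ _ => rfl)

lemma Finset.sum_le_sum_exp_mul_of_neg_mem {s : Finset ℝ} (hs : ∀ l ∈ s, -l ∈ s) {c : ℝ → ℝ}
    (hc : ∀ l ∈ s, 0 ≤ c l) (hc_neg : ∀ l ∈ s, c (-l) = c l) (a : ℝ) :
    ∑ l ∈ s, c l ≤ ∑ l ∈ s, Real.exp (a * l) * c l := by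
  have hsymm : ∑ l ∈ s, Real.exp (a * l) * c l = ∑ l ∈ s, Real.cosh (a * l) * c l := by
    have hneg : ∑ l ∈ s, Real.exp (-(a * l)) * c l = ∑ l ∈ s, Real.exp (a * l) * c l := by
      rw [← Finset.sum_comp_neg_of_neg_mem hs fun l => Real.exp (a * l) * c l]
      exact Finset.sum_congr rfl fun l hl => by rw [mul_neg, hc_neg l hl]
    simp only [Real.cosh_eq, add_div, add_mul, Finset.sum_add_distrib, div_mul_eq_mul_div,
      ← Finset.sum_div, hneg]
    ring
  rw [hsymm]
  exact Finset.sum_le_sum fun l hl => le_mul_of_one_le_left (hc l hl) (Real.one_le_cosh _)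

section LinearAlgebra

variable {K V ι : Type*} [Field K] [AddCommGroup V] [Module K V]

lemma Module.End.eq_zero_of_sum_eigenvectors_eq_zero {T : Module.End K V} {s : Finset K}
    {v : K → V} (hv : ∀ l ∈ s, T (v l) = l • v l) (hsum : ∑ l ∈ s, v l = 0) :
    ∀ l ∈ s, v l = 0 :=
  (iSupIndep_iff_finsetSum_eq_zero_imp_eq_zero _).mp T.eigenspaces_iSupIndep s v
    (fun l hl => Module.End.mem_eigenspace_iff.mpr (hv l hl)) hsum

lemma Module.End.apply_eigencomponent_of_anticommute {T θ : Module.End K V}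
    (hTθ : ∀ x, T (θ x) = -θ (T x)) {s : Finset K} (hs : ∀ l ∈ s, -l ∈ s) {v : K → V}
    (hv : ∀ l ∈ s, T (v l) = l • v l) (hθv : θ (∑ l ∈ s, v l) = ∑ l ∈ s, v l) :
    ∀ l ∈ s, θ (v l) = v (-l) := by
  have hw_eigen : ∀ l ∈ s, T (θ (v (-l)) - v l) = l • (θ (v (-l)) - v l) := by
    intro l hl
    rw [map_sub, hTθ, hv _ (hs l hl), hv l hl, map_smul, smul_sub, neg_smul, neg_neg]
  have hw_sum : ∑ l ∈ s, (θ (v (-l)) - v l) = 0 := by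
    rw [Finset.sum_sub_distrib, ← map_sum, Finset.sum_comp_neg_of_neg_mem hs, hθv, sub_self]
  intro l hl
  simpa [sub_eq_zero] using eq_zero_of_sum_eigenvectors_eq_zero hw_eigen hw_sum (-l) (hs l hl)

lemma LinearMap.IsAdjointPair.apply_eq_zero_of_eigenvalue_ne {B : LinearMap.BilinForm K V}
    {T : Module.End K V} (hT : B.IsAdjointPair B T T) {x y : V} {l m : K}
    (hx : T x = l • x) (hy : T y = m • y) (hlm : l ≠ m) : B x y = 0 := by
  have h := hT x y
  rw [hx, hy, map_smul, map_smul, LinearMap.smul_apply, smul_eq_mul, smul_eq_mul] at h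
  exact (mul_eq_mul_right_iff.mp h).resolve_left hlm

lemma LinearMap.BilinForm.apply_sum_smul_sum_smul_of_orthogonal (B : LinearMap.BilinForm K V)
    {s : Finset ι} {v : ι → V} (horth : ∀ i ∈ s, ∀ j ∈ s, i ≠ j → B (v i) (v j) = 0)
    (a b : ι → K) :
    B (∑ i ∈ s, a i • v i) (∑ j ∈ s, b j • v j) = ∑ i ∈ s, a i * b i * B (v i) (v i) := by
  simp only [map_sum, map_smul, LinearMap.sum_apply, LinearMap.smul_apply, smul_eq_mul]
  refine Finset.sum_congr rfl fun i hi => ?_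
  rw [Finset.sum_eq_single_of_mem i hi fun j hj hji => by rw [horth j hj i hi hji, mul_zero]]
  ring

end LinearAlgebra

lemma NormedSpace.exp_apply_of_apply_eq_smul {𝕂 E : Type*} [RCLike 𝕂] [NormedAddCommGroup E]
    [NormedSpace 𝕂 E] [CompleteSpace E] {A : E →L[𝕂] E} {x : E} {c : 𝕂} (h : A x = c • x) :
    NormedSpace.exp A x = NormedSpace.exp c • x := by
  have hpow : ∀ n : ℕ, (A ^ n) x = c ^ n • x := by
    intro n
    induction n with
    | zero => simp
    | succ n ih => rw [pow_succ', mul_apply_eq_comp, ih, map_smul, h, smul_smul, pow_succ]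
  have hA :=
    (NormedSpace.exp_series_hasSum_exp' (𝕂 := 𝕂) A).mapL (ContinuousLinearMap.apply 𝕂 E x)
  have hc := (NormedSpace.exp_series_hasSum_exp' (𝕂 := 𝕂) c).smul_const x
  simp only [ContinuousLinearMap.apply_apply, smul_apply, hpow, smul_smul, smul_eq_mul] at hA hc
  exact hA.unique hc

lemma ad_bracket_eq_commutator {R L : Type*} [CommRing R] [AddCommGroup L] [Module R L]
    (br : L →ₗ[R] L →ₗ[R] L) (hjac : ∀ X Y Z : L, br X (br Y Z) = br (br X Y) Z + br Y (br X Z))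
    (X Y : L) : (br (br X Y) : Module.End R L) = br X * br Y - br Y * br X := by
  ext Z
  rw [LinearMap.sub_apply, Module.End.mul_apply, Module.End.mul_apply, hjac,
    add_sub_cancel_right]

lemma bracket_theta_of_theta_eq_neg {R L : Type*} [CommRing R] [AddCommGroup L] [Module R L]
    {br : L →ₗ[R] L →ₗ[R] L} {θ : L →ₗ[R] L} (hθbr : ∀ X Y, θ (br X Y) = br (θ X) (θ Y))
    {Z : L} (hZ : θ Z = -Z) (X : L) : br Z (θ X) = -θ (br Z X) := by
  rw [hθbr, hZ, map_neg, LinearMap.neg_apply, neg_neg]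

section LieAlgebra

variable {L : Type*} [NormedAddCommGroup L] [NormedSpace ℝ L] [FiniteDimensional ℝ L]
  (br : L →ₗ[ℝ] L →ₗ[ℝ] L) (θ : L →ₗ[ℝ] L)

noncomputable def bthetaForm : LinearMap.BilinForm ℝ L :=
  -(((LinearMap.mul ℝ (Module.End ℝ L)).compl₁₂ br br).compr₂ (LinearMap.trace ℝ L)).compl₂ θ

@[simp] lemma bthetaForm_apply (X Y : L) : bthetaForm br θ X Y = Btheta br θ X Y := rfl

lemma killingB_comm (X Y : L) : killingB br X Y = killingB br Y X :=
  LinearMap.trace_mul_comm ℝ (br X) (br Y)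

lemma killingB_bracket_left (hjac : ∀ X Y Z : L, br X (br Y Z) = br (br X Y) Z + br Y (br X Z))
    (Z X Y : L) : killingB br (br Z X) Y = -killingB br X (br Z Y) := by
  change LinearMap.trace ℝ L (br (br Z X) * br Y) = -LinearMap.trace ℝ L (br X * br (br Z Y))
  rw [ad_bracket_eq_commutator br hjac, ad_bracket_eq_commutator br hjac, sub_mul, mul_sub,
    map_sub, map_sub, ← mul_assoc, ← mul_assoc, LinearMap.trace_mul_cycle (f := br X) (g := br Y)]
  ring

lemma Btheta_theta_theta (hθ2 : ∀ X, θ (θ X) = X) (X Y : L) :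
    Btheta br θ (θ X) (θ Y) = Btheta br θ Y X := by
  rw [Btheta, Btheta, hθ2, killingB_comm]

lemma isAdjointPair_bthetaForm_ad
    (hjac : ∀ X Y Z : L, br X (br Y Z) = br (br X Y) Z + br Y (br X Z))
    (hθbr : ∀ X Y, θ (br X Y) = br (θ X) (θ Y)) {Z : L} (hZ : θ Z = -Z) :
    (bthetaForm br θ).IsAdjointPair (bthetaForm br θ) (br Z) (br Z) := by
  intro X Y
  change -killingB br (br Z X) (θ Y) = -killingB br X (θ (br Z Y))
  rw [killingB_bracket_left br hjac, bracket_theta_of_theta_eq_neg hθbr hZ, neg_neg]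
  simp only [killingB, map_neg, LinearMap.comp_neg]

lemma Btheta_self_nonneg (hpos : ∀ X : L, X ≠ 0 → 0 < Btheta br θ X X) (X : L) :
    0 ≤ Btheta br θ X X := by
  rcases eq_or_ne X 0 with rfl | hX
  · simp [Btheta, killingB]
  · exact (hpos X hX).le

end LieAlgebra

theorem btheta_exp_ad_eigen_expansion_general {L : Type*} [NormedAddCommGroup L]
    [NormedSpace ℝ L] [FiniteDimensional ℝ L]
    (br : L →ₗ[ℝ] L →ₗ[ℝ] L)
    (hjac : ∀ X Y Z : L, br X (br Y Z) = br (br X Y) Z + br Y (br X Z))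
    (θ : L →ₗ[ℝ] L) (hθ2 : ∀ X, θ (θ X) = X)
    (hθbr : ∀ X Y, θ (br X Y) = br (θ X) (θ Y))
    (hpos : ∀ X : L, X ≠ 0 → 0 < Btheta br θ X X)
    (Z : L) (hZ : θ Z = -Z) (Y' : L) (hY' : θ Y' = Y')
    (s : Finset ℝ) (hs : ∀ l ∈ s, -l ∈ s)
    (Yv : ℝ → L) (hsum : Y' = ∑ l ∈ s, Yv l)
    (heig : ∀ l ∈ s, br Z (Yv l) = l • Yv l)
    (g : L →ₗ[ℝ] L)
    (hgdef : g =
      ((NormedSpace.exp (LinearMap.toContinuousLinearMap (br Z)) : L →L[ℝ] L) :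
        L →ₗ[ℝ] L)) :
    (∀ l ∈ s, θ (Yv l) = Yv (-l)) ∧
    Btheta br θ (g Y') (g Y') = ∑ l ∈ s, Real.exp (2 * l) * Btheta br θ (Yv l) (Yv l) ∧
    Btheta br θ Y' Y' ≤ Btheta br θ (g Y') (g Y') := by
  have hθYv : ∀ l ∈ s, θ (Yv l) = Yv (-l) :=
    Module.End.apply_eigencomponent_of_anticommute (bracket_theta_of_theta_eq_neg hθbr hZ) hs
      heig (by rw [← hsum, hY'])
  have horth : ∀ l ∈ s, ∀ m ∈ s, l ≠ m → bthetaForm br θ (Yv l) (Yv m) = 0 :=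
    fun l hl m hm hlm => (isAdjointPair_bthetaForm_ad br θ hjac hθbr hZ)
      |>.apply_eq_zero_of_eigenvalue_ne (heig l hl) (heig m hm) hlm
  have hgY' : g Y' = ∑ l ∈ s, Real.exp l • Yv l := by
    rw [hsum, map_sum, hgdef, Real.exp_eq_exp_ℝ]
    exact Finset.sum_congr rfl fun l hl => NormedSpace.exp_apply_of_apply_eq_smul (heig l hl)
  have hexpand : Btheta br θ (g Y') (g Y') =
      ∑ l ∈ s, Real.exp (2 * l) * Btheta br θ (Yv l) (Yv l) := by
    rw [hgY', ← bthetaForm_apply, (bthetaForm br θ).apply_sum_smul_sum_smul_of_orthogonal horth]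
    simp only [bthetaForm_apply, ← Real.exp_add, two_mul]
  have hY'expand : Btheta br θ Y' Y' = ∑ l ∈ s, Btheta br θ (Yv l) (Yv l) := by
    rw [hsum]
    simpa only [Pi.one_apply, one_smul, one_mul, bthetaForm_apply]
      using (bthetaForm br θ).apply_sum_smul_sum_smul_of_orthogonal horth 1 1
  refine ⟨hθYv, hexpand, ?_⟩
  rw [hY'expand, hexpand]
  exact Finset.sum_le_sum_exp_mul_of_neg_mem hs (fun l _ => Btheta_self_nonneg br θ hpos _)
    (fun l hl => by rw [← hθYv l hl, Btheta_theta_theta br θ hθ2]) 2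

/-- Let `g = k ⊕ m` be the Cartan decomposition of a real semisimple Lie algebra
(bracket `br`, Cartan involution `θ`), `Z ∈ m`, `Y′ ∈ k`, and write
`Y′ = Σ_λ Y_λ` with `Y_λ` eigenvectors of `ad Z` for the (real) eigenvalues `λ` ranging
over a finite set `s` closed under negation.  Then `θ(Y_λ) = Y_{−λ}` for each `λ`, and
`B_θ(Ad(exp Z)Y′, Ad(exp Z)Y′) = Σ_λ e^{2λ} B_θ(Y_λ, Y_λ) ≥ B_θ(Y′, Y′)`. -/
theorem btheta_exp_ad_eigen_expansion {L : Type*} [NormedAddCommGroup L]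
    [NormedSpace ℝ L] [FiniteDimensional ℝ L]
    (br : L →ₗ[ℝ] L →ₗ[ℝ] L)
    (hskew : ∀ X Y : L, br X Y = -br Y X)
    (hjac : ∀ X Y Z : L, br X (br Y Z) = br (br X Y) Z + br Y (br X Z))
    (θ : L →ₗ[ℝ] L) (hθ2 : ∀ X, θ (θ X) = X)
    (hθbr : ∀ X Y, θ (br X Y) = br (θ X) (θ Y))
    (hpos : ∀ X : L, X ≠ 0 → 0 < Btheta br θ X X)
    (Z : L) (hZ : θ Z = -Z) (Y' : L) (hY' : θ Y' = Y')
    (s : Finset ℝ) (hs : ∀ l ∈ s, -l ∈ s)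
    (Yv : ℝ → L) (hsum : Y' = ∑ l ∈ s, Yv l)
    (heig : ∀ l ∈ s, br Z (Yv l) = l • Yv l)
    (g : L →ₗ[ℝ] L)
    (hgdef : g =
      ((NormedSpace.exp (LinearMap.toContinuousLinearMap (br Z)) : L →L[ℝ] L) :
        L →ₗ[ℝ] L)) :
    (∀ l ∈ s, θ (Yv l) = Yv (-l)) ∧
    Btheta br θ (g Y') (g Y') = ∑ l ∈ s, Real.exp (2 * l) * Btheta br θ (Yv l) (Yv l) ∧
    Btheta br θ Y' Y' ≤ Btheta br θ (g Y') (g Y') :=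
  btheta_exp_ad_eigen_expansion_general br hjac θ hθ2 hθbr hpos Z hZ Y' hY' s hs Yv hsum heig g
    hgdef
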